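/- arXiv:2302.08181 — 3 statements merged into one kernel-verified Lean document; each statement's English description precedes it below -/
import Mathlib

section
/- Fix σ > 0, σ₀ > 0, T > 0 and let ζ(t) = σ²σ₀²/(σ² + tσ₀²). The function m̂₂(t) = 1/(1 + log(ζ(t)/ζ(T))) − 1 is the unique solution on [0,T] of the terminal value problem m̂₂'(t) = σ^{-2} ζ(t) (m̂₂(t) + 1)², m̂₂(T) = 0, and it satisfies −1 < m̂₂(t) < 0 for all t ∈ [0,T). -/
open Real Set Filter

lemma log_ratio_hasDerivAt (c d T t : ℝ) (hu : 0 < c + t * d) (hv : 0 < c + T * d) :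
    HasDerivAt (fun s => Real.log ((c + T * d) / (c + s * d))) (-(d / (c + t * d))) t := by
  have hcont : Continuous (fun s : ℝ => c + s * d) := by continuity
  have hev : ∀ᶠ s in nhds t, 0 < c + s * d :=
    (hcont.tendsto t).eventually (eventually_gt_nhds hu)
  have h1 : HasDerivAt (fun s : ℝ => c + s * d) d t := by
    simpa using ((hasDerivAt_id t).mul_const d).const_add c
  have h2 : HasDerivAt (fun s => Real.log (c + s * d)) ((c + t * d)⁻¹ * d) t :=
    by have := (Real.hasDerivAt_log hu.ne').comp t h1; exact this
  have h3 : HasDerivAt (fun s => Real.log (c + T * d) - Real.log (c + s * d))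
      (-((c + t * d)⁻¹ * d)) t := h2.const_sub _
  have h4 : HasDerivAt (fun s => Real.log ((c + T * d) / (c + s * d)))
      (-((c + t * d)⁻¹ * d)) t := by
    apply h3.congr_of_eventuallyEq
    filter_upwards [hev] with s hs
    rw [Real.log_div hv.ne' hs.ne']
  convert h4 using 1
  rw [div_eq_inv_mul]

/-- With `ζ(t) = σ²σ₀²/(σ² + tσ₀²)`, the function
`m̂₂(t) = 1/(1 + log(ζ(t)/ζ(T))) − 1` is the unique solution on `[0,T]` of
`m̂₂'(t) = σ⁻² ζ(t)(m̂₂(t)+1)²`, `m̂₂(T) = 0`, and `−1 < m̂₂(t) < 0` on `[0,T)`. -/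
theorem riccati_alpha_zero (σ σ₀ T : ℝ) (hσ : 0 < σ) (hσ₀ : 0 < σ₀) (hT : 0 < T)
    (ζ : ℝ → ℝ) (hζ : ∀ t, ζ t = σ ^ 2 * σ₀ ^ 2 / (σ ^ 2 + t * σ₀ ^ 2))
    (m : ℝ → ℝ) (hm : ∀ t, m t = 1 / (1 + Real.log (ζ t / ζ T)) - 1) :
    (∀ t ∈ Set.Icc (0 : ℝ) T, HasDerivAt m ((σ ^ 2)⁻¹ * ζ t * (m t + 1) ^ 2) t) ∧
    m T = 0 ∧
    (∀ n : ℝ → ℝ,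
      (∀ t ∈ Set.Icc (0 : ℝ) T, HasDerivAt n ((σ ^ 2)⁻¹ * ζ t * (n t + 1) ^ 2) t) →
      n T = 0 → ∀ t ∈ Set.Icc (0 : ℝ) T, n t = m t) ∧
    (∀ t ∈ Set.Ico (0 : ℝ) T, -1 < m t ∧ m t < 0) := by
  have hc : (0:ℝ) < σ ^ 2 := by positivity
  have hd : (0:ℝ) < σ₀ ^ 2 := by positivity
  set c := σ ^ 2 with hcdef
  set d := σ₀ ^ 2 with hddef
  have hvT : 0 < c + T * d := by nlinarith
  have hu : ∀ s : ℝ, 0 ≤ s → 0 < c + s * d := fun s hs => by nlinarith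
  have hrat : ∀ s, 0 < c + s * d → ζ s / ζ T = (c + T * d) / (c + s * d) := by
    intro s hs
    rw [hζ, hζ]
    rw [div_div_div_comm]
    rw [div_self (by positivity), div_div_eq_mul_div, one_mul]
  have hmeq : ∀ s, 0 < c + s * d →
      m s = (1 + Real.log ((c + T * d) / (c + s * d)))⁻¹ - 1 := by
    intro s hs
    rw [hm, hrat s hs, one_div]
  have hLnonneg : ∀ s ∈ Icc (0:ℝ) T, 0 ≤ Real.log ((c + T * d) / (c + s * d)) := by
    intro s hs
    apply Real.log_nonneg
    rw [le_div_iff₀ (hu s hs.1)]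
    nlinarith [hs.2]
  have h1L : ∀ s ∈ Icc (0:ℝ) T, 0 < 1 + Real.log ((c + T * d) / (c + s * d)) :=
    fun s hs => by linarith [hLnonneg s hs]
  have hLT : Real.log ((c + T * d) / (c + T * d)) = 0 := by
    rw [div_self hvT.ne', Real.log_one]
  -- derivative claim
  have hderiv : ∀ t ∈ Icc (0:ℝ) T, HasDerivAt m ((σ ^ 2)⁻¹ * ζ t * (m t + 1) ^ 2) t := by
    intro t ht
    have hut := hu t ht.1
    have hL' := log_ratio_hasDerivAt c d T t hut hvT
    have hinv : HasDerivAt (fun s => (1 + Real.log ((c + T * d) / (c + s * d)))⁻¹ - 1)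
        (-(-(d / (c + t * d))) / (1 + Real.log ((c + T * d) / (c + t * d))) ^ 2) t :=
      ((hL'.const_add 1).inv (h1L t ht).ne').sub_const 1
    have hev : ∀ᶠ s in nhds t, 0 < c + s * d := by
      have hcont : Continuous (fun s : ℝ => c + s * d) := by continuity
      exact (hcont.tendsto t).eventually (eventually_gt_nhds hut)
    have heq : m =ᶠ[nhds t]
        fun s => (1 + Real.log ((c + T * d) / (c + s * d)))⁻¹ - 1 := by
      filter_upwards [hev] with s hs using hmeq s hs
    have hfinal := hinv.congr_of_eventuallyEq heq
    convert hfinal using 1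
    case e'_4 => rfl
    case e'_5 => rfl
    have hm1 : m t + 1 = (1 + Real.log ((c + T * d) / (c + t * d)))⁻¹ := by
      rw [hmeq t hut]; ring
    rw [hm1, hζ t]
    rw [neg_neg]
    field_simp
    rfl
  refine ⟨hderiv, ?_, ?_, ?_⟩
  · rw [hmeq T hvT, hLT]; norm_num
  · -- uniqueness
    intro n hn hnT t ht
    have hncont : ContinuousOn n (Icc 0 T) :=
      fun s hs => (hn s hs).continuousAt.continuousWithinAt
    have hζcont : ContinuousOn ζ (Icc 0 T) := by
      apply ContinuousOn.congr (f := fun s => c * d / (c + s * d))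
      · exact (continuousOn_const.div (by fun_prop) (fun s hs => (hu s hs.1).ne'))
      · intro s hs; rw [hζ s]
    set A : ℝ → ℝ := fun s => (σ ^ 2)⁻¹ * ζ s * (n s + 1) with hAdef
    have hAcont : ContinuousOn A (Icc 0 T) := by
      apply ContinuousOn.mul _ (hncont.add continuousOn_const)
      exact continuousOn_const.mul hζcont
    obtain ⟨C, hC⟩ := isCompact_Icc.exists_bound_of_continuousOn hAcont
    set ψ : ℝ → ℝ :=
      fun s => (n s + 1) * (1 + Real.log ((c + T * d) / (c + s * d))) - 1 with hψdef
    have hψderiv : ∀ s ∈ Icc (0:ℝ) T, HasDerivAt ψ (A s * ψ s) s := by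
      intro s hs
      have hus := hu s hs.1
      have hL' := log_ratio_hasDerivAt c d T s hus hvT
      have h := (((hn s hs).add_const 1).mul (hL'.const_add 1)).sub_const 1
      convert h using 1
      case e'_4 => rfl
      case e'_5 => rfl
      case e'_8 => rfl
      rw [hAdef, hψdef]
      simp only
      rw [hζ s]
      field_simp
      ring
    -- Gronwall backwards
    have hmemflip : ∀ s ∈ Icc (0:ℝ) (T - t), T - s ∈ Icc (0:ℝ) T := by
      intro s hs
      constructor <;> [linarith [hs.2, ht.1]; linarith [hs.1]]
    have hgcont : ContinuousOn (fun s => ψ (T - s)) (Icc 0 (T - t)) := by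
      intro s hs
      exact ((hψderiv (T - s) (hmemflip s hs)).continuousAt.comp
        ((continuous_const.sub continuous_id).continuousAt)).continuousWithinAt
    have hg0 : ψ T = 0 := by
      rw [hψdef]; simp only
      rw [hnT, hLT]; ring
    have key := norm_le_gronwallBound_of_norm_deriv_right_le (a := 0) (b := T - t)
      (δ := (0:ℝ)) (K := C) (ε := 0)
      (f := fun s => ψ (T - s)) (f' := fun s => A (T - s) * ψ (T - s) * (-1))
      hgcont
      (fun s hs => by
        have hmem := hmemflip s ⟨hs.1, hs.2.le⟩
        have hlin : HasDerivAt (fun x : ℝ => T - x) (-1) s := by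
          simpa using (hasDerivAt_id s).const_sub T
        exact ((hψderiv (T - s) hmem).comp s hlin).hasDerivWithinAt)
      (by simp only [sub_zero, hg0, norm_zero]; exact le_rfl)
      (fun s hs => by
        have hmem := hmemflip s ⟨hs.1, hs.2.le⟩
        have := hC (T - s) hmem
        rw [norm_mul, norm_mul]
        simp only [norm_neg, norm_one, mul_one, add_zero]
        exact mul_le_mul_of_nonneg_right this (norm_nonneg _))
    have hTt : T - t ∈ Icc (0:ℝ) (T - t) := ⟨by linarith [ht.2], le_refl _⟩
    have hkey := key (T - t) hTt
    rw [gronwallBound_ε0] at hkey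
    simp only [zero_mul] at hkey
    have hψt : ψ t = 0 := by
      have : ‖ψ (T - (T - t))‖ ≤ 0 := hkey
      rw [show T - (T - t) = t by ring] at this
      simpa using le_antisymm this (norm_nonneg _)
    have hX := (h1L t ht).ne'
    rw [hmeq t (hu t ht.1)]
    rw [hψdef] at hψt
    simp only at hψt
    rw [eq_sub_iff_add_eq]
    apply eq_inv_of_mul_eq_one_left
    linear_combination hψt
  · -- bounds
    intro t ht
    have hut := hu t ht.1
    have hLpos : 0 < Real.log ((c + T * d) / (c + t * d)) := by
      apply Real.log_pos
      rw [lt_div_iff₀ hut]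
      nlinarith [ht.2]
    have hinv1 : (1 + Real.log ((c + T * d) / (c + t * d)))⁻¹ < 1 := by
      rw [inv_lt_one_iff₀]; right; linarith
    have hinv0 : 0 < (1 + Real.log ((c + T * d) / (c + t * d)))⁻¹ := by positivity
    rw [hmeq t hut]
    constructor <;> linarith
end

section
/- The function G(α) = ∫₀^∞ e^{-x} (1 + (1-α)x)^{α/(1-α)} dx is continuous and strictly increasing on (-∞, 0], satisfies G(0) = 1, and lim_{α → -∞} G(α) = 0. -/
open MeasureTheory

/-- The function `G(α) = ∫₀^∞ e^{-x}(1+(1-α)x)^{α/(1-α)} dx`. -/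
noncomputable def G (α : ℝ) : ℝ :=
  ∫ x in Set.Ioi (0 : ℝ), Real.exp (-x) * (1 + (1 - α) * x) ^ (α / (1 - α))

namespace Gaux

noncomputable def f (α x : ℝ) : ℝ :=
  Real.exp (-x) * (1 + (1 - α) * x) ^ (α / (1 - α))

lemma G_eq (α : ℝ) : G α = ∫ x in Set.Ioi (0 : ℝ), f α x := rfl

lemma base_gt_one {α x : ℝ} (hα : α ≤ 0) (hx : 0 < x) : 1 < 1 + (1 - α) * x := by
  nlinarith

lemma exponent_nonpos {α : ℝ} (hα : α ≤ 0) : α / (1 - α) ≤ 0 :=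
  div_nonpos_of_nonpos_of_nonneg hα (by linarith)

lemma f_nonneg {α x : ℝ} (hα : α ≤ 0) (hx : 0 < x) : 0 ≤ f α x := by
  have := base_gt_one hα hx
  exact mul_nonneg (Real.exp_pos _).le (Real.rpow_nonneg (by linarith) _)

lemma f_le_exp {α x : ℝ} (hα : α ≤ 0) (hx : 0 < x) : f α x ≤ Real.exp (-x) := by
  have h1 := base_gt_one hα hx
  have : (1 + (1 - α) * x) ^ (α / (1 - α)) ≤ 1 :=
    Real.rpow_le_one_of_one_le_of_nonpos h1.le (exponent_nonpos hα)
  calc f α x ≤ Real.exp (-x) * 1 :=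
        mul_le_mul_of_nonneg_left this (Real.exp_pos _).le
    _ = Real.exp (-x) := mul_one _

/-- rewrite `f` in the form `e^{-x} c^s` with `c = (1+(1-α)x)⁻¹ ∈ (0,1)` and
`s = -α/(1-α) ∈ [0,1)`. -/
lemma f_eq_inv_rpow {α x : ℝ} (hα : α ≤ 0) (hx : 0 < x) :
    f α x = Real.exp (-x) * ((1 + (1 - α) * x)⁻¹) ^ (-(α / (1 - α))) := by
  have h1 := base_gt_one hα hx
  rw [f, Real.inv_rpow (by linarith), ← Real.rpow_neg (by linarith), neg_neg]

lemma exponent_lt_one {α : ℝ} (hα : α ≤ 0) : -(α / (1 - α)) < 1 := by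
  have h : (0:ℝ) < 1 - α := by linarith
  rw [neg_div', div_lt_one h]
  linarith

lemma exponent_strictAnti {α β : ℝ} (hαβ : α < β) (hβ : β ≤ 0) :
    -(β / (1 - β)) < -(α / (1 - α)) := by
  have hα : (0:ℝ) < 1 - α := by linarith
  have hβ' : (0:ℝ) < 1 - β := by linarith
  rw [neg_div', neg_div', div_lt_div_iff₀ hβ' hα]
  nlinarith

/-- pointwise strict monotonicity in `α`. -/
lemma f_strictMono {α β x : ℝ} (hαβ : α < β) (hβ : β ≤ 0) (hx : 0 < x) :
    f α x < f β x := by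
  have hα : α ≤ 0 := by linarith
  have hbα := base_gt_one hα hx
  have hbβ := base_gt_one hβ hx
  rw [f_eq_inv_rpow hα hx, f_eq_inv_rpow hβ hx]
  set cα := (1 + (1 - α) * x)⁻¹ with hcα
  set cβ := (1 + (1 - β) * x)⁻¹ with hcβ
  have hcα0 : 0 < cα := inv_pos.2 (by linarith)
  have hcβ0 : 0 < cβ := inv_pos.2 (by linarith)
  have hcβ1 : cβ ≤ 1 := inv_le_one_of_one_le₀ hbβ.le
  have hcc : cα < cβ := by
    apply inv_strictAnti₀ (by linarith)
    nlinarith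
  have hsα : 0 < -(α / (1 - α)) := by
    have : α / (1 - α) < 0 := div_neg_of_neg_of_pos (by linarith) (by linarith)
    linarith
  have hse : -(β / (1 - β)) ≤ -(α / (1 - α)) := (exponent_strictAnti hαβ hβ).le
  have h1 : cα ^ (-(α / (1 - α))) < cβ ^ (-(α / (1 - α))) :=
    Real.rpow_lt_rpow hcα0.le hcc hsα
  have h2 : cβ ^ (-(α / (1 - α))) ≤ cβ ^ (-(β / (1 - β))) :=
    Real.rpow_le_rpow_of_exponent_ge hcβ0 hcβ1 hse
  exact mul_lt_mul_of_pos_left (h1.trans_le h2) (Real.exp_pos _)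

/-- continuity in `α` for fixed `x > 0`. -/
lemma f_continuousOn_alpha {x : ℝ} (hx : 0 < x) :
    ContinuousOn (fun α => f α x) (Set.Iic (0:ℝ)) := by
  intro α hα
  have hα0 : α ≤ 0 := hα
  have hb : (0:ℝ) < 1 + (1 - α) * x := by have := base_gt_one hα0 hx; linarith
  apply ContinuousAt.continuousWithinAt
  apply ContinuousAt.mul continuousAt_const
  exact ContinuousAt.rpow
    (continuousAt_const.add ((continuousAt_const.sub continuousAt_id).mul continuousAt_const))
    (ContinuousAt.div continuousAt_id (continuousAt_const.sub continuousAt_id)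
      (show (1:ℝ) - α ≠ 0 from ne_of_gt (by linarith)))
    (Or.inl (ne_of_gt hb))

lemma f_continuousOn_x {α : ℝ} (hα : α ≤ 0) :
    ContinuousOn (f α) (Set.Ioi (0:ℝ)) := by
  intro x hx
  have hx0 : 0 < x := hx
  have hb : (0:ℝ) < 1 + (1 - α) * x := by have := base_gt_one hα hx0; linarith
  apply ContinuousAt.continuousWithinAt
  apply ContinuousAt.mul
  · exact (Real.continuous_exp.comp continuous_neg).continuousAt
  · exact ContinuousAt.rpow
      (continuousAt_const.add (continuousAt_const.mul continuousAt_id))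
      continuousAt_const (Or.inl (ne_of_gt hb))

lemma f_aesm {α : ℝ} (hα : α ≤ 0) :
    AEStronglyMeasurable (f α) (volume.restrict (Set.Ioi (0:ℝ))) :=
  (f_continuousOn_x hα).aestronglyMeasurable measurableSet_Ioi

lemma exp_neg_integrable : IntegrableOn (fun x => Real.exp (-x)) (Set.Ioi (0:ℝ)) := by
  have := exp_neg_integrableOn_Ioi 0 (one_pos)
  simpa using this

lemma f_bound {α : ℝ} (hα : α ≤ 0) :
    ∀ᵐ x ∂(volume.restrict (Set.Ioi (0:ℝ))), ‖f α x‖ ≤ Real.exp (-x) := by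
  rw [ae_restrict_iff' measurableSet_Ioi]
  filter_upwards with x hx
  rw [Real.norm_eq_abs, abs_of_nonneg (f_nonneg hα hx)]
  exact f_le_exp hα hx

lemma f_integrable {α : ℝ} (hα : α ≤ 0) :
    IntegrableOn (f α) (Set.Ioi (0:ℝ)) :=
  Integrable.mono exp_neg_integrable (f_aesm hα)
    (by filter_upwards [f_bound hα] with x h using h.trans (le_abs_self _))

end Gaux

open Gaux in
/-- `G` is continuous and strictly increasing on `(-∞, 0]`, `G(0) = 1`,
and `G(α) → 0` as `α → -∞`. -/
theorem G_properties :
    ContinuousOn G (Set.Iic (0 : ℝ)) ∧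
    StrictMonoOn G (Set.Iic (0 : ℝ)) ∧
    G 0 = 1 ∧
    Filter.Tendsto G Filter.atBot (nhds 0) := by
  refine ⟨?_, ?_, ?_, ?_⟩
  · -- continuity
    have : ContinuousOn (fun α => ∫ x in Set.Ioi (0:ℝ), f α x) (Set.Iic (0:ℝ)) := by
      apply continuousOn_of_dominated (bound := fun x => Real.exp (-x))
      · exact fun α hα => f_aesm hα
      · exact fun α hα => f_bound hα
      · exact exp_neg_integrable
      · rw [ae_restrict_iff' measurableSet_Ioi]
        filter_upwards with x hx using f_continuousOn_alpha hx
    exact this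
  · -- strict monotonicity
    intro α hα β hβ hαβ
    have hα0 : α ≤ 0 := hα
    have hβ0 : β ≤ 0 := hβ
    rw [G_eq, G_eq, ← sub_pos, ← integral_sub (f_integrable hβ0) (f_integrable hα0)]
    rw [setIntegral_pos_iff_support_of_nonneg_ae]
    · have hsub : Set.Ioi (0:ℝ) ⊆
          (Function.support fun x => f β x - f α x) ∩ Set.Ioi 0 := by
        intro x hx
        refine ⟨?_, hx⟩
        have := f_strictMono hαβ hβ0 hx
        simp only [Function.mem_support]
        intro h
        rw [sub_eq_zero] at h
        exact absurd h (ne_of_gt this)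
      calc (0:ENNReal) < volume (Set.Ioi (0:ℝ)) := by
            rw [Real.volume_Ioi]; exact ENNReal.zero_lt_top
        _ ≤ _ := measure_mono hsub
    · rw [Filter.EventuallyLE, ae_restrict_iff' measurableSet_Ioi]
      filter_upwards with x hx
      simp only [Pi.zero_apply]
      linarith [f_strictMono hαβ hβ0 hx]
    · exact (f_integrable hβ0).sub (f_integrable hα0)
  · -- G 0 = 1
    simp only [G, sub_zero, zero_div, Real.rpow_zero, mul_one, one_mul]
    exact integral_exp_neg_Ioi_zero
  · -- limit at -∞
    have key : Filter.Tendsto (fun α => ∫ x in Set.Ioi (0:ℝ), f α x) Filter.atBot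
        (nhds (∫ x in Set.Ioi (0:ℝ), (0:ℝ))) := by
      apply tendsto_integral_filter_of_dominated_convergence (bound := fun x => Real.exp (-x))
      · filter_upwards [Filter.eventually_le_atBot (0:ℝ)] with α hα using f_aesm hα
      · filter_upwards [Filter.eventually_le_atBot (0:ℝ)] with α hα using f_bound hα
      · exact exp_neg_integrable
      · rw [ae_restrict_iff' measurableSet_Ioi]
        filter_upwards with x hx
        -- pointwise limit: f α x → 0 as α → -∞
        apply squeeze_zero' (g := fun α => Real.exp (-x) * Real.sqrt ((1 + (1 - α) * x)⁻¹))
        · filter_upwards [Filter.eventually_le_atBot (0:ℝ)] with α hα using f_nonneg hα hx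
        · filter_upwards [Filter.eventually_le_atBot (-1:ℝ)] with α hα
          have hα0 : α ≤ 0 := by linarith
          have hb := base_gt_one hα0 hx
          have hc0 : (0:ℝ) < (1 + (1 - α) * x)⁻¹ := inv_pos.2 (by linarith)
          have hc1 : (1 + (1 - α) * x)⁻¹ ≤ 1 := inv_le_one_of_one_le₀ hb.le
          have hs : (1:ℝ)/2 ≤ -(α / (1 - α)) := by
            have h1 : (0:ℝ) < 1 - α := by linarith
            rw [neg_div', le_div_iff₀ h1]
            linarith
          rw [f_eq_inv_rpow hα0 hx, Real.sqrt_eq_rpow]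
          exact mul_le_mul_of_nonneg_left
            (Real.rpow_le_rpow_of_exponent_ge hc0 hc1 hs) (Real.exp_pos _).le
        · have h1 : Filter.Tendsto (fun α : ℝ => 1 + (1 - α) * x) Filter.atBot Filter.atTop := by
            apply Filter.tendsto_atTop_add_const_left
            apply Filter.Tendsto.atTop_mul_const hx
            apply Filter.tendsto_atTop_add_const_left
            exact Filter.tendsto_neg_atBot_atTop.congr (fun a => rfl)
          have h2 : Filter.Tendsto (fun α : ℝ => (1 + (1 - α) * x)⁻¹) Filter.atBot (nhds 0) :=
            tendsto_inv_atTop_zero.comp h1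
          have h3 : Filter.Tendsto (fun α : ℝ => Real.sqrt ((1 + (1 - α) * x)⁻¹))
              Filter.atBot (nhds 0) := by
            have h4 := (Real.continuous_sqrt.tendsto 0).comp h2
            rw [Real.sqrt_zero] at h4
            exact h4
          have := h3.const_mul (Real.exp (-x))
          simpa using this
    simp only [integral_zero] at key
    exact key.congr (fun α => (G_eq α).symm)
end

section
/- Let a, b : [0,T] → ℝ be continuous with a bounded, and suppose m₂, m₃, m₅ : [0,T] → ℝ are C¹ functions satisfying σ² m₅'(t) = (1 + ζ(t)m₂(t)) a₂(t) m₅(t) − r(1 + ζ(t)m₂(t)), with the relations σ² m₂'(t) = (1 + ζ(t)m₂(t)) a₁(t) + ζ(t)m₂(t) and σ² m₃'(t) = −2ζ(t)m₂(t) − ζ(t)²m₂(t)², where a₁(t) = (1+ζ(t)m₂(t))(ζ(t)^{-1} + αm₂(t))/(ζ(t)^{-1} − αm₃(t)), a₂(t) = α(1+ζ(t)m₂(t))/(ζ(t)^{-1} − αm₃(t)), and ζ(t)^{-1} − αm₃(t) > 0 on [0,T], together with terminal conditions m₂(T) = m₃(T) = m₅(T) = 0. Then m₅(t) = −r m₂(t)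 − r m₃(t) for all t ∈ [0,T]. -/
/-- Given the Riccati system for `m₂, m₃, m₅` with
`a₁(t) = (1+ζ(t)m₂(t))(ζ(t)⁻¹+αm₂(t))/(ζ(t)⁻¹−αm₃(t))` and
`a₂(t) = α(1+ζ(t)m₂(t))/(ζ(t)⁻¹−αm₃(t))`, positivity `ζ(t)⁻¹−αm₃(t) > 0`,
and terminal conditions `m₂(T)=m₃(T)=m₅(T)=0`, one has
`m₅(t) = −r m₂(t) − r m₃(t)` on `[0,T]`. -/
theorem m5_identity (T σ r α : ℝ) (hT : 0 < T) (hσ : 0 < σ)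
    (ζ m₂ m₃ m₅ : ℝ → ℝ)
    (hζcont : ContinuousOn ζ (Set.Icc 0 T))
    (hζpos : ∀ t ∈ Set.Icc (0 : ℝ) T, 0 < ζ t)
    (hpos : ∀ t ∈ Set.Icc (0 : ℝ) T, 0 < (ζ t)⁻¹ - α * m₃ t)
    (hm₂ : ∀ t ∈ Set.Icc (0 : ℝ) T, HasDerivAt m₂
      ((σ ^ 2)⁻¹ * ((1 + ζ t * m₂ t) *
        ((1 + ζ t * m₂ t) * ((ζ t)⁻¹ + α * m₂ t) / ((ζ t)⁻¹ - α * m₃ t))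
        + ζ t * m₂ t)) t)
    (hm₃ : ∀ t ∈ Set.Icc (0 : ℝ) T, HasDerivAt m₃
      ((σ ^ 2)⁻¹ * (-2 * ζ t * m₂ t - (ζ t) ^ 2 * (m₂ t) ^ 2)) t)
    (hm₅ : ∀ t ∈ Set.Icc (0 : ℝ) T, HasDerivAt m₅
      ((σ ^ 2)⁻¹ * ((1 + ζ t * m₂ t) *
        (α * (1 + ζ t * m₂ t) / ((ζ t)⁻¹ - α * m₃ t)) * m₅ t
        - r * (1 + ζ t * m₂ t))) t)
    (hm₂T : m₂ T = 0) (hm₃T : m₃ T = 0) (hm₅T : m₅ T = 0) :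
    ∀ t ∈ Set.Icc (0 : ℝ) T, m₅ t = -r * m₂ t - r * m₃ t := by
  set u : ℝ → ℝ := fun t => r * m₂ t + r * m₃ t + m₅ t with hu_def
  set c : ℝ → ℝ := fun t => (σ ^ 2)⁻¹ * ((1 + ζ t * m₂ t) *
      (α * (1 + ζ t * m₂ t) / ((ζ t)⁻¹ - α * m₃ t))) with hc_def
  have hσ2 : (σ : ℝ) ^ 2 ≠ 0 := by positivity
  -- u satisfies the linear ODE u' = c u
  have hu : ∀ t ∈ Set.Icc (0 : ℝ) T, HasDerivAt u (c t * u t) t := by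
    intro t ht
    have h := (((hm₂ t ht).const_mul r).add ((hm₃ t ht).const_mul r)).add (hm₅ t ht)
    refine h.congr_deriv ?_
    symm
    have hζ : ζ t ≠ 0 := (hζpos t ht).ne'
    have hden : (ζ t)⁻¹ - α * m₃ t ≠ 0 := (hpos t ht).ne'
    have hden' : 1 - ζ t * α * m₃ t ≠ 0 := by
      have h2 : ζ t * ((ζ t)⁻¹ - α * m₃ t) = 1 - ζ t * α * m₃ t := by
        field_simp
      rw [← h2]
      exact mul_ne_zero hζ hden
    simp only [hc_def, hu_def]
    rw [inv_eq_one_div (ζ t)]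
    have hrw : (1:ℝ) / ζ t - α * m₃ t = (1 - ζ t * α * m₃ t) / ζ t := by
      field_simp
    rw [hrw]
    field_simp
    ring
  -- continuity of relevant functions on [0, T]
  have hm₂c : ContinuousOn m₂ (Set.Icc 0 T) := fun t ht =>
    (hm₂ t ht).continuousAt.continuousWithinAt
  have hm₃c : ContinuousOn m₃ (Set.Icc 0 T) := fun t ht =>
    (hm₃ t ht).continuousAt.continuousWithinAt
  have hm₅c : ContinuousOn m₅ (Set.Icc 0 T) := fun t ht =>
    (hm₅ t ht).continuousAt.continuousWithinAt
  have huc : ContinuousOn u (Set.Icc 0 T) :=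
    ((continuousOn_const.mul hm₂c).add (continuousOn_const.mul hm₃c)).add hm₅c
  have hcc : ContinuousOn c (Set.Icc 0 T) := by
    apply continuousOn_const.mul
    apply (continuousOn_const.add (hζcont.mul hm₂c)).mul
    apply ContinuousOn.div
    · exact continuousOn_const.mul (continuousOn_const.add (hζcont.mul hm₂c))
    · exact (hζcont.inv₀ (fun t ht => (hζpos t ht).ne')).sub (continuousOn_const.mul hm₃c)
    · exact fun t ht => (hpos t ht).ne'
  -- bound on c
  obtain ⟨K, hK⟩ := isCompact_Icc.exists_bound_of_continuousOn hcc
  have hK0 : 0 ≤ max K 0 := le_max_right _ _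
  -- time-reversed function g
  set g : ℝ → ℝ := fun t => u (T - t) with hg_def
  have hmem : ∀ t ∈ Set.Icc (0 : ℝ) T, T - t ∈ Set.Icc (0 : ℝ) T := by
    intro t ht
    exact ⟨by linarith [ht.2], by linarith [ht.1]⟩
  have hg' : ∀ t ∈ Set.Icc (0 : ℝ) T,
      HasDerivAt g (-(c (T - t) * u (T - t))) t := by
    intro t ht
    have h1 : HasDerivAt (fun s : ℝ => T - s) (-1) t := by
      simpa using (hasDerivAt_id t).const_sub T
    have h2 := (hu (T - t) (hmem t ht)).comp t h1
    refine h2.congr_deriv ?_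
    ring
  have hgc : ContinuousOn g (Set.Icc 0 T) := by
    intro t ht
    exact (hg' t ht).continuousAt.continuousWithinAt
  have h0 : ‖g 0‖ ≤ 0 := by
    simp [hg_def, hu_def, hm₂T, hm₃T, hm₅T]
  have hbound := norm_le_gronwallBound_of_norm_deriv_right_le (K := max K 0)
    (ε := 0) (a := 0) (b := T) hgc
    (fun t ht => ((hg' t (Set.mem_Icc_of_Ico ht)).hasDerivWithinAt)) h0
    (by
      intro t ht
      have htT := hmem t (Set.mem_Icc_of_Ico ht)
      have := hK (T - t) htT
      have h1 : ‖-(c (T - t) * u (T - t))‖ = |c (T - t)| * ‖g t‖ := by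
        simp [hg_def, abs_mul]
      rw [h1, add_zero]
      have : |c (T - t)| ≤ max K 0 := le_trans this (le_max_left _ _)
      exact mul_le_mul_of_nonneg_right this (norm_nonneg _) |>.trans
        (mul_le_mul_of_nonneg_left le_rfl hK0))
  -- conclude u = 0 on [0,T]
  intro t ht
  have htT := hmem t ht
  have := hbound (T - t) ⟨htT.1, htT.2⟩
  rw [gronwallBound_ε0, zero_mul] at this
  have hut : u t = 0 := by
    have : ‖u t‖ ≤ 0 := by simpa [hg_def, sub_sub_cancel] using this
    simpa using le_antisymm this (norm_nonneg _)
  simp only [hu_def] at hut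
  linarith
end
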